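/- Let L, L̃ be self-adjoint operators on a finite-dimensional complex Hilbert space H with spectra contained in {0} ∪ [γ, ∞) for a common γ > 0, and let P, P̃ be the orthogonal projections onto ker L and ker L̃ respectively. Then ‖P − P̃‖ ≤ (2/γ) ‖L − L̃‖ in operator norm. -/

import Mathlib

/-!
On the orthogonal complement of its kernel, a self-adjoint `L` with spectral gap `γ`
satisfies `γ ‖y‖ ≤ ‖L y‖` (expand `y` in an eigenbasis). Since `L (1 - P) = L` and
`L P̃ = (L - L̃) P̃`, this gives `‖(1 - P) P̃‖ ≤ ‖L - L̃‖ / γ`, and symmetrically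
`‖(1 - P̃) P‖ ≤ ‖L - L̃‖ / γ`. Finally `P - P̃ = P (1 - P̃) - (1 - P) P̃`, and
`‖P (1 - P̃)‖ = ‖(1 - P̃) P‖` by taking adjoints.
-/

theorem norm_sub_le_norm_one_sub_mul_add {R : Type*} [NormedRing R] [StarRing R]
    [NormedStarGroup R] {p q : R} (hp : IsSelfAdjoint p) (hq : IsSelfAdjoint q) :
    ‖p - q‖ ≤ ‖(1 - q) * p‖ + ‖(1 - p) * q‖ := by
  have hstar : ‖p * (1 - q)‖ = ‖(1 - q) * p‖ := by
    rw [← norm_star, star_mul, star_sub, star_one, hp.star_eq, hq.star_eq]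
  calc ‖p - q‖ = ‖p * (1 - q) - (1 - p) * q‖ := by noncomm_ring
    _ ≤ ‖p * (1 - q)‖ + ‖(1 - p) * q‖ := norm_sub_le _ _
    _ = ‖(1 - q) * p‖ + ‖(1 - p) * q‖ := by rw [hstar]

theorem EuclideanSpace.mul_norm_le_norm_of_forall_mul_norm_le {𝕜 ι : Type*} [RCLike 𝕜]
    [Fintype ι] {c : ℝ} (hc : 0 ≤ c) {x y : EuclideanSpace 𝕜 ι}
    (h : ∀ i, c * ‖x i‖ ≤ ‖y i‖) : c * ‖x‖ ≤ ‖y‖ := by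
  rw [← sq_le_sq₀ (by positivity) (norm_nonneg _), mul_pow, EuclideanSpace.norm_sq_eq,
    EuclideanSpace.norm_sq_eq, Finset.mul_sum]
  gcongr with i
  rw [← mul_pow]
  exact pow_le_pow_left₀ (by positivity) (h i) 2

section SpectralGap

variable {𝕜 E : Type*} [RCLike 𝕜] [NormedAddCommGroup E] [InnerProductSpace 𝕜 E]
  [FiniteDimensional 𝕜 E] {γ : ℝ}

theorem LinearMap.IsSymmetric.mul_norm_le_norm_apply_of_mem_ker_orthogonal
    {T : E →ₗ[𝕜] E} (hT : T.IsSymmetric) (hγ : 0 ≤ γ)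
    (hs : spectrum 𝕜 T ⊆ {0} ∪ {μ | γ ≤ ‖μ‖}) {y : E} (hy : y ∈ (LinearMap.ker T)ᗮ) :
    γ * ‖y‖ ≤ ‖T y‖ := by
  set b := hT.eigenvectorBasis rfl
  rw [← b.repr.norm_map y, ← b.repr.norm_map (T y)]
  refine EuclideanSpace.mul_norm_le_norm_of_forall_mul_norm_le hγ fun i ↦ ?_
  rw [hT.eigenvectorBasis_apply_self_apply, norm_mul]
  rcases hs (hT.hasEigenvalue_eigenvalues rfl i).mem_spectrum with hzero | hle
  · have hker : b i ∈ LinearMap.ker T := by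
      rw [LinearMap.mem_ker, hT.apply_eigenvectorBasis, Set.mem_singleton_iff.mp hzero,
        zero_smul]
    rw [b.repr_apply_apply, Submodule.inner_right_of_mem_orthogonal hker hy]
    simp
  · exact mul_le_mul_of_nonneg_right hle (norm_nonneg _)

theorem LinearMap.IsSymmetric.mul_norm_sub_starProjection_ker_le
    {T : E →ₗ[𝕜] E} (hT : T.IsSymmetric) (hγ : 0 ≤ γ)
    (hs : spectrum 𝕜 T ⊆ {0} ∪ {μ | γ ≤ ‖μ‖}) (x : E) :
    γ * ‖x - (LinearMap.ker T).starProjection x‖ ≤ ‖T x‖ := by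
  have hPx : T ((LinearMap.ker T).starProjection x) = 0 :=
    (LinearMap.ker T).starProjection_apply_mem x
  calc γ * ‖x - (LinearMap.ker T).starProjection x‖
      ≤ ‖T (x - (LinearMap.ker T).starProjection x)‖ :=
        hT.mul_norm_le_norm_apply_of_mem_ker_orthogonal hγ hs
          ((LinearMap.ker T).sub_starProjection_mem_orthogonal x)
    _ = ‖T x‖ := by rw [map_sub, hPx, sub_zero]

theorem IsSelfAdjoint.norm_one_sub_starProjection_ker_mul_starProjection_ker_le
    [CompleteSpace E] {A : E →L[𝕜] E} (hA : IsSelfAdjoint A) (hγ : 0 < γ)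
    (hs : spectrum 𝕜 A ⊆ {0} ∪ {μ | γ ≤ ‖μ‖}) (B : E →L[𝕜] E) :
    ‖(1 - (LinearMap.ker (A : E →ₗ[𝕜] E)).starProjection) *
        (LinearMap.ker (B : E →ₗ[𝕜] E)).starProjection‖ ≤ ‖A - B‖ / γ := by
  refine ContinuousLinearMap.opNorm_le_bound _ (by positivity) fun x ↦ ?_
  set y := (LinearMap.ker (B : E →ₗ[𝕜] E)).starProjection x
  have hBy : B y = 0 := (LinearMap.ker (B : E →ₗ[𝕜] E)).starProjection_apply_mem x
  have hAy := hA.isSymmetric.mul_norm_sub_starProjection_ker_le hγ.le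
    (ContinuousLinearMap.spectrum_eq (f := A) ▸ hs) y
  rw [div_mul_eq_mul_div, le_div_iff₀ hγ, mul_comm]
  calc γ * ‖y - (LinearMap.ker (A : E →ₗ[𝕜] E)).starProjection y‖
      ≤ ‖A y‖ := hAy
    _ = ‖(A - B) y‖ := by rw [sub_apply, hBy, sub_zero]
    _ ≤ ‖A - B‖ * ‖y‖ := (A - B).le_opNorm y
    _ ≤ ‖A - B‖ * ‖x‖ := by gcongr; exact Submodule.norm_starProjection_apply_le _ x

end SpectralGap

/-- If `L, L̃` are self-adjoint with spectra in `{0} ∪ [γ, ∞)` for a common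
`γ > 0`, and `P, P̃` are the orthogonal projections onto their kernels, then
`‖P − P̃‖ ≤ (2/γ) ‖L − L̃‖`. -/
theorem stmt7 {H : Type*} [NormedAddCommGroup H] [InnerProductSpace ℂ H]
    [FiniteDimensional ℂ H]
    (L L' : H →L[ℂ] H) (hL : IsSelfAdjoint L) (hL' : IsSelfAdjoint L')
    (γ : ℝ) (hγ : 0 < γ)
    (hs : spectrum ℂ L ⊆ {0} ∪ (Complex.ofReal '' Set.Ici γ))
    (hs' : spectrum ℂ L' ⊆ {0} ∪ (Complex.ofReal '' Set.Ici γ)) :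
    ‖(LinearMap.ker (L : H →ₗ[ℂ] H)).subtypeL.comp ((LinearMap.ker (L : H →ₗ[ℂ] H)).orthogonalProjectionOnto)
      - (LinearMap.ker (L' : H →ₗ[ℂ] H)).subtypeL.comp ((LinearMap.ker (L' : H →ₗ[ℂ] H)).orthogonalProjectionOnto)‖
      ≤ (2 / γ) * ‖L - L'‖ := by
  have hIci : Complex.ofReal '' Set.Ici γ ⊆ {μ : ℂ | γ ≤ ‖μ‖} := by
    rintro _ ⟨r, hr, rfl⟩
    show γ ≤ ‖(r : ℂ)‖
    rw [Complex.norm_real, Real.norm_eq_abs]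
    exact (Set.mem_Ici.mp hr).trans (le_abs_self r)
  change ‖(LinearMap.ker (L : H →ₗ[ℂ] H)).starProjection
    - (LinearMap.ker (L' : H →ₗ[ℂ] H)).starProjection‖ ≤ _
  have hLL' := hL.norm_one_sub_starProjection_ker_mul_starProjection_ker_le hγ
    (hs.trans (Set.union_subset_union_right _ hIci)) L'
  have hL'L := hL'.norm_one_sub_starProjection_ker_mul_starProjection_ker_le hγ
    (hs'.trans (Set.union_subset_union_right _ hIci)) L
  rw [norm_sub_rev L'] at hL'L
  calc _ ≤ _ := norm_sub_le_norm_one_sub_mul_add (isSelfAdjoint_starProjection _)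
        (isSelfAdjoint_starProjection _)
    _ ≤ ‖L - L'‖ / γ + ‖L - L'‖ / γ := add_le_add hL'L hLL'
    _ = 2 / γ * ‖L - L'‖ := by ring
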